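/- arXiv:math/0601410 — 2 statements merged into one kernel-verified Lean document; each statement's English description precedes it below -/
import Mathlib

section
/- Let g ∈ C¹(ℝ,ℝ) with g(0)=0 satisfy: (g1) g(ξ) ≥ c₁ min(|ξ|^p, |ξ|^q) for all ξ, and (g2) the Nemytskii operator g' maps bounded sets of Lᵖ+L^q(Ω) to bounded sets of its dual, with operator bound M on the ball of radius R. Then for all R > 0 there exists c(R) > 0 such that for every v ∈ Lᵖ+L^q(Ω) with ‖v‖_{Lᵖ+L^q} ≤ R, one has max(∫_{Ω^>} |v|^p dx, ∫_{Ω^≤} |v|^q dx) ≤ c(R)·‖v‖_{Lᵖ+L^q}, where Ω^> = {|v| > 1} and Ω^≤ = {|v| ≤ 1}. -/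
open MeasureTheory Set ENNReal NNReal

noncomputable def sumNorm {α : Type*} [MeasurableSpace α] (p q : ℝ) (μ : Measure α)
    (v : α → ℝ) : ℝ≥0∞ :=
  ⨅ v₁ : α → ℝ, eLpNorm v₁ (ENNReal.ofReal p) μ + eLpNorm (v - v₁) (ENNReal.ofReal q) μ

def MemSum {α : Type*} [MeasurableSpace α] (p q : ℝ) (μ : Measure α) (v : α → ℝ) : Prop :=
  ∃ v₁ v₂ : α → ℝ, v = v₁ + v₂ ∧ MemLp v₁ (ENNReal.ofReal p) μ ∧ MemLp v₂ (ENNReal.ofReal q) μ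

lemma sumNorm_congr_ae {α : Type*} [MeasurableSpace α] (p q : ℝ) (μ : Measure α)
    {v w : α → ℝ} (h : v =ᵐ[μ] w) : sumNorm p q μ v = sumNorm p q μ w := by
  refine iInf_congr fun v₁ => ?_
  congr 1
  exact eLpNorm_congr_ae (h.mono fun x hx => by simp [Pi.sub_apply, hx])

lemma sumNorm_smul_le {α : Type*} [MeasurableSpace α] (p q : ℝ) (μ : Measure α)
    (v : α → ℝ) (t : ℝ) (ht : |t| ≤ 1) : sumNorm p q μ (t • v) ≤ sumNorm p q μ v := by
  refine le_iInf fun v₁ => ?_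
  refine iInf_le_of_le (t • v₁) ?_
  have h1 : t • v - t • v₁ = t • (v - v₁) := (smul_sub t v v₁).symm
  rw [h1, eLpNorm_const_smul, eLpNorm_const_smul]
  have ht' : (‖t‖₊ : ℝ≥0∞) ≤ 1 := by
    rw [← ENNReal.coe_one, ENNReal.coe_le_coe]
    simpa [← NNReal.coe_le_coe, Real.norm_eq_abs] using ht
  calc (‖t‖₊ : ℝ≥0∞) * eLpNorm v₁ (ENNReal.ofReal p) μ
        + (‖t‖₊ : ℝ≥0∞) * eLpNorm (v - v₁) (ENNReal.ofReal q) μ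
      ≤ 1 * eLpNorm v₁ (ENNReal.ofReal p) μ
        + 1 * eLpNorm (v - v₁) (ENNReal.ofReal q) μ := by gcongr
    _ = _ := by simp

lemma ftc_bound (g : ℝ → ℝ) (hg : ContDiff ℝ 1 g) (hg0 : g 0 = 0) (ξ : ℝ) :
    ENNReal.ofReal (g ξ) ≤
      ∫⁻ t in Ioc (0:ℝ) 1, ENNReal.ofReal (|deriv g (t * ξ)| * |ξ|) := by
  have hdg : Continuous (deriv g) := hg.continuous_deriv le_rfl
  have h1 : (∫ t in (0:ℝ)..1, ξ • deriv g (t * ξ)) = g ξ := by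
    have hcv := intervalIntegral.integral_comp_smul_deriv
      (a := (0:ℝ)) (b := 1) (f := fun t => t * ξ) (f' := fun _ => ξ) (g := deriv g)
      (fun x _ => hasDerivAt_mul_const ξ) continuousOn_const hdg
    simp only [Function.comp, zero_mul, one_mul] at hcv
    rw [hcv, intervalIntegral.integral_deriv_eq_sub
      (fun x _ => hg.differentiable one_ne_zero x) (hdg.intervalIntegrable 0 ξ), hg0, sub_zero]
  have h2 : g ξ ≤ ∫ t in (0:ℝ)..1, |ξ • deriv g (t * ξ)| := by
    calc g ξ ≤ |g ξ| := le_abs_self _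
      _ = |∫ t in (0:ℝ)..1, ξ • deriv g (t * ξ)| := by rw [h1]
      _ ≤ _ := intervalIntegral.abs_integral_le_integral_abs zero_le_one
  have hint : IntegrableOn (fun t => |ξ • deriv g (t * ξ)|) (Ioc (0:ℝ) 1) volume := by
    apply Continuous.integrableOn_Ioc
    exact (Continuous.abs (f := fun t => ξ • deriv g (t * ξ))
      ((hdg.comp (continuous_id.mul continuous_const)).const_smul ξ))
  calc ENNReal.ofReal (g ξ)
      ≤ ENNReal.ofReal (∫ t in Ioc (0:ℝ) 1, |ξ • deriv g (t * ξ)|) := by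
        refine ENNReal.ofReal_le_ofReal ?_
        rwa [intervalIntegral.integral_of_le zero_le_one] at h2
    _ = ∫⁻ t in Ioc (0:ℝ) 1, ENNReal.ofReal (|ξ • deriv g (t * ξ)|) :=
        ofReal_integral_eq_lintegral_ofReal hint (Filter.Eventually.of_forall fun t => abs_nonneg _)
    _ = _ := by
        refine lintegral_congr fun t => ?_
        rw [smul_eq_mul, abs_mul, mul_comm]

theorem sum_norm_controls_split_integrals
    (p q : ℝ) (hp : 1 < p) (hp6 : p < 6) (hq6 : 6 < q)
    (Ω : Set (EuclideanSpace ℝ (Fin 3))) (hΩ : MeasurableSet Ω)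
    (g : ℝ → ℝ) (hg : ContDiff ℝ 1 g) (hg0 : g 0 = 0)
    (c₁ : ℝ) (hc₁ : 0 < c₁)
    (hg1 : ∀ ξ : ℝ, c₁ * min (|ξ| ^ p) (|ξ| ^ q) ≤ g ξ)
    (hg2 : ∀ R : ℝ, 0 < R → ∃ M : ℝ≥0,
      ∀ v w : EuclideanSpace ℝ (Fin 3) → ℝ,
        sumNorm p q (volume.restrict Ω) v ≤ ENNReal.ofReal R →
        (∫⁻ x, ENNReal.ofReal (|deriv g (v x)| * |w x|) ∂(volume.restrict Ω))
          ≤ M * sumNorm p q (volume.restrict Ω) w) :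
    ∀ R : ℝ, 0 < R → ∃ c : ℝ≥0, 0 < c ∧
      ∀ v : EuclideanSpace ℝ (Fin 3) → ℝ,
        MemSum p q (volume.restrict Ω) v →
        sumNorm p q (volume.restrict Ω) v ≤ ENNReal.ofReal R →
        max (∫⁻ x in {x | 1 < |v x|}, ENNReal.ofReal (|v x| ^ p) ∂(volume.restrict Ω))
            (∫⁻ x in {x | |v x| ≤ 1}, ENNReal.ofReal (|v x| ^ q) ∂(volume.restrict Ω))
          ≤ c * sumNorm p q (volume.restrict Ω) v := by
  intro R hR
  obtain ⟨M, hM⟩ := hg2 R hR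
  set μ := volume.restrict Ω with hμ
  refine ⟨(c₁.toNNReal)⁻¹ * M + 1, by positivity, ?_⟩
  intro v hv hvR
  -- measurable representative
  obtain ⟨w₁, w₂, hvsum, h1, h2⟩ := hv
  have hva : AEMeasurable v μ := by
    rw [hvsum]; exact (h1.1.aemeasurable.add h2.1.aemeasurable)
  set v' := hva.mk v with hv'def
  have hv'meas : Measurable v' := hva.measurable_mk
  have hvv' : v =ᵐ[μ] v' := hva.ae_eq_mk
  have hsumeq : sumNorm p q μ v = sumNorm p q μ v' := sumNorm_congr_ae p q μ hvv'
  have hdg : Continuous (deriv g) := hg.continuous_deriv le_rfl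
  have hpq : p ≤ q := by linarith
  have hq0 : 0 < q := by linarith
  have hp0 : 0 < p := by linarith
  -- key estimate : ∫ g(v') ≤ M * ‖v'‖
  have key : ∫⁻ x, ENNReal.ofReal (g (v' x)) ∂μ ≤ M * sumNorm p q μ v' := by
    have hmeas : Measurable (Function.uncurry fun (x : EuclideanSpace ℝ (Fin 3)) (t : ℝ) =>
        ENNReal.ofReal (|deriv g (t * v' x)| * |v' x|)) := by
      apply Measurable.ennreal_ofReal
      exact ((hdg.measurable.comp (measurable_snd.mul
        (hv'meas.comp measurable_fst))).abs.mul (hv'meas.comp measurable_fst).abs)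
    calc ∫⁻ x, ENNReal.ofReal (g (v' x)) ∂μ
        ≤ ∫⁻ x, (∫⁻ t in Ioc (0:ℝ) 1,
            ENNReal.ofReal (|deriv g (t * v' x)| * |v' x|)) ∂μ :=
          lintegral_mono fun x => ftc_bound g hg hg0 (v' x)
      _ = ∫⁻ t in Ioc (0:ℝ) 1,
            (∫⁻ x, ENNReal.ofReal (|deriv g (t * v' x)| * |v' x|) ∂μ) :=
          lintegral_lintegral_swap hmeas.aemeasurable
      _ ≤ ∫⁻ _ in Ioc (0:ℝ) 1, (M * sumNorm p q μ v') := by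
          refine setLIntegral_mono' measurableSet_Ioc fun t ht => ?_
          have ht1 : |t| ≤ 1 := by
            rw [abs_le]; exact ⟨by linarith [ht.1], ht.2⟩
          have hsm : sumNorm p q μ (t • v') ≤ ENNReal.ofReal R :=
            le_trans (sumNorm_smul_le p q μ v' t ht1) (hsumeq ▸ hvR)
          have := hM (t • v') v' hsm
          simpa [Pi.smul_apply, smul_eq_mul] using this
      _ = M * sumNorm p q μ v' := by
          rw [setLIntegral_const]
          simp [Real.volume_Ioc]
  -- dividing by c₁
  have ha0 : ENNReal.ofReal c₁ ≠ 0 := by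
    simp [ENNReal.ofReal_eq_zero, not_le, hc₁]
  have final : ∀ X : ℝ≥0∞, ENNReal.ofReal c₁ * X ≤ M * sumNorm p q μ v' →
      X ≤ ((c₁.toNNReal)⁻¹ * M + 1 : ℝ≥0) * sumNorm p q μ v := by
    intro X hX
    have step : X ≤ (ENNReal.ofReal c₁)⁻¹ * (M * sumNorm p q μ v') := by
      rw [← one_mul X, ← ENNReal.inv_mul_cancel ha0 ENNReal.ofReal_ne_top, mul_assoc]
      exact mul_le_mul_right hX _
    refine step.trans ?_
    rw [hsumeq, ← mul_assoc]
    refine mul_le_mul_left ?_ _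
    have hcoe : (ENNReal.ofReal c₁)⁻¹ = ((c₁.toNNReal)⁻¹ : ℝ≥0) := by
      rw [ENNReal.ofReal, ← ENNReal.coe_inv]
      simp [Real.toNNReal_eq_zero, not_le, hc₁]
    rw [hcoe, ← ENNReal.coe_mul, ENNReal.coe_le_coe]
    exact le_add_of_nonneg_right zero_le_one |>.trans_eq rfl
  -- nonnegativity of g
  have hgnn : ∀ ξ : ℝ, 0 ≤ g ξ := fun ξ => le_trans
    (mul_nonneg hc₁.le (le_min (Real.rpow_nonneg (abs_nonneg ξ) p)
      (Real.rpow_nonneg (abs_nonneg ξ) q))) (hg1 ξ)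
  refine max_le ?_ ?_
  · -- p part
    have hset : {x | 1 < |v x|} =ᵐ[μ] {x | 1 < |v' x|} := by
      filter_upwards [hvv'] with x hx
      show (1 < |v x|) = (1 < |v' x|)
      rw [hx]
    have hPeq : ∫⁻ x in {x | 1 < |v x|}, ENNReal.ofReal (|v x| ^ p) ∂μ
        = ∫⁻ x in {x | 1 < |v' x|}, ENNReal.ofReal (|v' x| ^ p) ∂μ := by
      rw [Measure.restrict_congr_set hset]
      exact lintegral_congr_ae (ae_restrict_of_ae (hvv'.mono fun x hx => by simp only [hx]))
    rw [hPeq]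
    refine final _ ?_
    rw [← lintegral_const_mul' _ _ ENNReal.ofReal_ne_top]
    refine le_trans ?_ key
    have hs : MeasurableSet {x | 1 < |v' x|} :=
      measurableSet_lt measurable_const hv'meas.abs
    rw [← lintegral_indicator hs]
    refine lintegral_mono fun x => ?_
    by_cases hxs : x ∈ {x | 1 < |v' x|}
    · rw [Set.indicator_of_mem hxs, ← ENNReal.ofReal_mul hc₁.le]
      refine ENNReal.ofReal_le_ofReal ?_
      have hx1 : 1 ≤ |v' x| := le_of_lt hxs
      calc c₁ * |v' x| ^ p = c₁ * min (|v' x| ^ p) (|v' x| ^ q) := by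
            rw [min_eq_left (Real.rpow_le_rpow_of_exponent_le hx1 hpq)]
        _ ≤ g (v' x) := hg1 _
    · rw [Set.indicator_of_notMem hxs]
      exact zero_le
  · -- q part
    have hset : {x | |v x| ≤ 1} =ᵐ[μ] {x | |v' x| ≤ 1} := by
      filter_upwards [hvv'] with x hx
      show (|v x| ≤ 1) = (|v' x| ≤ 1)
      rw [hx]
    have hQeq : ∫⁻ x in {x | |v x| ≤ 1}, ENNReal.ofReal (|v x| ^ q) ∂μ
        = ∫⁻ x in {x | |v' x| ≤ 1}, ENNReal.ofReal (|v' x| ^ q) ∂μ := by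
      rw [Measure.restrict_congr_set hset]
      exact lintegral_congr_ae (ae_restrict_of_ae (hvv'.mono fun x hx => by simp only [hx]))
    rw [hQeq]
    refine final _ ?_
    rw [← lintegral_const_mul' _ _ ENNReal.ofReal_ne_top]
    refine le_trans ?_ key
    have hs : MeasurableSet {x | |v' x| ≤ 1} :=
      measurableSet_le hv'meas.abs measurable_const
    rw [← lintegral_indicator hs]
    refine lintegral_mono fun x => ?_
    by_cases hxs : x ∈ {x | |v' x| ≤ 1}
    · rw [Set.indicator_of_mem hxs, ← ENNReal.ofReal_mul hc₁.le]
      refine ENNReal.ofReal_le_ofReal ?_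
      have hqp : |v' x| ^ q ≤ |v' x| ^ p := by
        rcases eq_or_lt_of_le (abs_nonneg (v' x)) with h0 | h0
        · rw [← h0, Real.zero_rpow (ne_of_gt hq0), Real.zero_rpow (ne_of_gt hp0)]
        · exact Real.rpow_le_rpow_of_exponent_ge h0 hxs hpq
      calc c₁ * |v' x| ^ q = c₁ * min (|v' x| ^ p) (|v' x| ^ q) := by
            rw [min_eq_right hqp]
        _ ≤ g (v' x) := hg1 _
    · rw [Set.indicator_of_notMem hxs]
      exact zero_le
end

section
/- Let 1 ≤ p < ∞ and let u, v ∈ Lᵖ(ℝ). Denote by u*, v* their Schwarz symmetric decreasing rearrangements. Then ‖u* − v*‖_{Lᵖ(ℝ)} ≤ ‖u − v‖_{Lᵖ(ℝ)}. -/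
open MeasureTheory ENNReal

/-- The Schwarz symmetric decreasing rearrangement of (the absolute value of) a function on `ℝ`,
defined by the layer-cake principle: `u* x` is the supremum of all levels `t ≥ 0` whose
superlevel set `{ |u| > t }` has measure exceeding `2|x|`. -/
noncomputable def schwarzRearr (u : ℝ → ℝ) (x : ℝ) : ℝ :=
  sSup ({0} ∪ {t : ℝ | 0 ≤ t ∧ ENNReal.ofReal (2 * |x|) < volume {y : ℝ | t < |u y|}})

section Aux

open Set intervalIntegral

/-- distribution function of |u| -/
noncomputable def distf (u : ℝ → ℝ) (t : ℝ) : ℝ≥0∞ := volume {y : ℝ | t < |u y|}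

/-- the defining set of the rearrangement -/
def Sset (u : ℝ → ℝ) (x : ℝ) : Set ℝ :=
  {0} ∪ {t : ℝ | 0 ≤ t ∧ ENNReal.ofReal (2 * |x|) < distf u t}

noncomputable def ker (p : ℝ) (z : ℝ × ℝ) : ℝ≥0∞ :=
  ENNReal.ofReal (p * (p-1) * |z.1 - z.2| ^ (p-2))

noncomputable def nu : Measure (ℝ × ℝ) :=
  (volume.restrict (Ioi 0)).prod (volume.restrict (Ioi 0))

def D1 (a b : ℝ) : Set (ℝ × ℝ) := {z | z.2 < z.1 ∧ z.1 < a ∧ b ≤ z.2}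
def D2 (a b : ℝ) : Set (ℝ × ℝ) := {z | z.1 < z.2 ∧ z.2 < b ∧ a ≤ z.1}

lemma measurable_ker (p : ℝ) : Measurable (ker p) :=
  ((((measurable_fst.sub measurable_snd).abs.pow measurable_const)).const_mul _).ennreal_ofReal

lemma measurableSet_D1 (a b : ℝ) : MeasurableSet (D1 a b) :=
  ((measurableSet_lt measurable_snd measurable_fst).inter
    ((measurableSet_lt measurable_fst measurable_const).inter
      (measurableSet_le measurable_const measurable_snd)))

lemma measurableSet_D2 (a b : ℝ) : MeasurableSet (D2 a b) :=
  ((measurableSet_lt measurable_fst measurable_snd).inter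
    ((measurableSet_lt measurable_snd measurable_const).inter
      (measurableSet_le measurable_const measurable_fst)))

lemma schwarz_eq_sSup (u : ℝ → ℝ) (x : ℝ) : schwarzRearr u x = sSup (Sset u x) := rfl

lemma Sset_nonempty (u : ℝ → ℝ) (x : ℝ) : (Sset u x).Nonempty := ⟨0, Or.inl rfl⟩

lemma Sset_nonneg (u : ℝ → ℝ) (x : ℝ) : ∀ t ∈ Sset u x, 0 ≤ t := by
  rintro t (rfl | ⟨h, _⟩) <;> [exact le_refl 0; exact h]

lemma schwarz_nonneg (u : ℝ → ℝ) (x : ℝ) : 0 ≤ schwarzRearr u x :=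
  Real.sSup_nonneg (Sset_nonneg u x)

lemma distf_anti (u : ℝ → ℝ) : Antitone (distf u) := by
  intro s t hst
  exact measure_mono (fun y hy => lt_of_le_of_lt hst hy)

lemma distf_right (u : ℝ → ℝ) (t : ℝ) {a : ℝ≥0∞} (ha : a < distf u t) :
    ∃ r, t < r ∧ a < distf u r := by
  have hU : {y : ℝ | t < |u y|} = ⋃ n : ℕ, {y : ℝ | t + (n+1:ℝ)⁻¹ < |u y|} := by
    ext y
    simp only [mem_setOf_eq, mem_iUnion]
    constructor
    · intro hy
      obtain ⟨n, hn⟩ := exists_nat_one_div_lt (sub_pos.2 hy)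
      exact ⟨n, by rw [one_div] at hn; linarith⟩
    · rintro ⟨n, hn⟩
      have : (0:ℝ) < (n+1:ℝ)⁻¹ := by positivity
      linarith
  have hmono : Monotone (fun n : ℕ => {y : ℝ | t + (n+1:ℝ)⁻¹ < |u y|}) := by
    intro m n hmn y hy
    have : (n+1:ℝ)⁻¹ ≤ (m+1:ℝ)⁻¹ := by
      apply inv_anti₀ (by positivity)
      exact_mod_cast by exact_mod_cast Nat.succ_le_succ hmn
    simp only [mem_setOf_eq] at *
    linarith
  have := hmono.measure_iUnion (μ := volume)
  rw [distf, hU, this, lt_iSup_iff] at ha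
  obtain ⟨n, hn⟩ := ha
  exact ⟨t + (n+1:ℝ)⁻¹, lt_add_of_pos_right t (by positivity), hn⟩

lemma bddAbove_Sset (u : ℝ → ℝ) (hm : Measurable u)
    (hfin : ∀ c : ℝ, 0 < c → distf u c ≠ ∞) {x : ℝ} (hx : x ≠ 0) :
    BddAbove (Sset u x) := by
  have h2x : (0:ℝ≥0∞) < ENNReal.ofReal (2 * |x|) := by
    rw [ENNReal.ofReal_pos]
    have := abs_pos.2 hx; linarith
  have htend : Filter.Tendsto (fun n : ℕ => distf u n) Filter.atTop (nhds 0) := by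
    have h1 : (⋂ n : ℕ, {y : ℝ | (n:ℝ) < |u y|}) = ∅ := by
      ext y
      simp only [mem_iInter, mem_setOf_eq, mem_empty_iff_false, iff_false, not_forall, not_lt]
      obtain ⟨n, hn⟩ := exists_nat_ge (|u y|)
      exact ⟨n, hn⟩
    have := tendsto_measure_iInter_atTop (μ := volume)
      (s := fun n : ℕ => {y : ℝ | (n:ℝ) < |u y|})
      (fun n => (measurableSet_lt measurable_const hm.abs).nullMeasurableSet)
      ?_ ⟨1, by simpa [distf] using hfin 1 one_pos⟩
    · rw [h1] at this; simpa [distf, Function.comp_def] using this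
    · intro m n hmn y hy
      simp only [mem_setOf_eq] at *
      exact lt_of_le_of_lt (by exact_mod_cast hmn) hy
  obtain ⟨n, hn⟩ := (htend.eventually_lt_const h2x).exists
  refine ⟨n, fun r hr => ?_⟩
  rcases hr with rfl | ⟨hr0, hlt⟩
  · exact Nat.cast_nonneg n
  · by_contra hcon
    push_neg at hcon
    exact absurd (lt_of_lt_of_le hlt (distf_anti u hcon.le)) (not_lt.2 hn.le)

lemma schwarz_lt_imp (u : ℝ → ℝ) {x c : ℝ} (hc : 0 ≤ c) (h : c < schwarzRearr u x) :
    ENNReal.ofReal (2 * |x|) < distf u c := by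
  rw [schwarz_eq_sSup] at h
  obtain ⟨r, hr, hcr⟩ := exists_lt_of_lt_csSup (Sset_nonempty u x) h
  rcases hr with rfl | ⟨hr0, hlt⟩
  · linarith
  · exact lt_of_lt_of_le hlt (distf_anti u hcr.le)

lemma imp_schwarz_lt (u : ℝ → ℝ) {x : ℝ} (hB : BddAbove (Sset u x)) {c : ℝ} (hc : 0 ≤ c)
    (h : ENNReal.ofReal (2 * |x|) < distf u c) : c < schwarzRearr u x := by
  obtain ⟨r, hcr, hr⟩ := distf_right u c h
  rw [schwarz_eq_sSup]
  exact lt_of_lt_of_le hcr (le_csSup hB (Or.inr ⟨le_trans hc hcr.le, hr⟩))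

lemma measurable_schwarz (u : ℝ → ℝ) (hm : Measurable u)
    (hfin : ∀ c : ℝ, 0 < c → distf u c ≠ ∞) : Measurable (schwarzRearr u) := by
  apply measurable_of_Ioi
  intro c
  rcases lt_or_ge c 0 with hc | hc
  · have : schwarzRearr u ⁻¹' Ioi c = univ := by
      ext x; simpa using lt_of_lt_of_le hc (schwarz_nonneg u x)
    rw [this]; exact MeasurableSet.univ
  · have hI : MeasurableSet {x : ℝ | ENNReal.ofReal (2 * |x|) < distf u c} := by
      have : Measurable fun x : ℝ => ENNReal.ofReal (2 * |x|) :=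
        ENNReal.measurable_ofReal.comp ((measurable_const.mul measurable_abs))
      exact this measurableSet_Iio
    have hsub : schwarzRearr u ⁻¹' Ioi c ⊆ {x : ℝ | ENNReal.ofReal (2 * |x|) < distf u c} :=
      fun x hx => schwarz_lt_imp u hc hx
    have hZ : {x : ℝ | ENNReal.ofReal (2 * |x|) < distf u c} \ schwarzRearr u ⁻¹' Ioi c ⊆ {0} := by
      intro x ⟨hx1, hx2⟩
      by_contra hx0
      exact hx2 (imp_schwarz_lt u (bddAbove_Sset u hm hfin hx0) hc hx1)
    have : schwarzRearr u ⁻¹' Ioi c =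
        {x : ℝ | ENNReal.ofReal (2 * |x|) < distf u c} \
          ({x : ℝ | ENNReal.ofReal (2 * |x|) < distf u c} \ schwarzRearr u ⁻¹' Ioi c) :=
      (Set.diff_diff_cancel_left hsub).symm
    rw [this]
    exact hI.diff ((Set.Subsingleton.anti subsingleton_singleton hZ).measurableSet)

/-- interval description -/
lemma Iset_eq (u : ℝ → ℝ) {c : ℝ} (hfin : distf u c ≠ ∞) :
    {x : ℝ | ENNReal.ofReal (2 * |x|) < distf u c} =
      Ioo (-((distf u c).toReal / 2)) ((distf u c).toReal / 2) := by
  ext x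
  simp only [mem_setOf_eq, mem_Ioo]
  rw [ENNReal.ofReal_lt_iff_lt_toReal (by positivity) hfin]
  constructor
  · intro h; rw [← abs_lt]; linarith [abs_nonneg x]
  · intro ⟨h1, h2⟩
    have : |x| < (distf u c).toReal / 2 := abs_lt.2 ⟨h1, h2⟩
    linarith

/-- Key comparison: superlevel symmetric-difference measures decrease under rearrangement. -/
lemma key_comparison (u v : ℝ → ℝ) (hmu : Measurable u) (hmv : Measurable v)
    (hfinu : ∀ c : ℝ, 0 < c → distf u c ≠ ∞) (hfinv : ∀ c : ℝ, 0 < c → distf v c ≠ ∞)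
    {s t : ℝ} (hs : 0 < s) (ht : 0 < t) :
    volume ({x | s < schwarzRearr u x} \ {x | t < schwarzRearr v x}) ≤
      volume ({y | s < |u y|} \ {y | t < |v y|}) := by
  set a := distf u s with ha
  set b := distf v t with hb
  have hafin : a ≠ ∞ := hfinu s hs
  have hbfin : b ≠ ∞ := hfinv t ht
  set Ia := {x : ℝ | ENNReal.ofReal (2 * |x|) < a} with hIa
  set Ib := {x : ℝ | ENNReal.ofReal (2 * |x|) < b} with hIb
  have h1 : {x | s < schwarzRearr u x} \ {x | t < schwarzRearr v x} ⊆ (Ia \ Ib) ∪ {0} := by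
    rintro x ⟨hx1, hx2⟩
    rcases eq_or_ne x 0 with rfl | hx0
    · exact Or.inr rfl
    · refine Or.inl ⟨schwarz_lt_imp u hs.le hx1, fun hxb => ?_⟩
      exact hx2 (imp_schwarz_lt v (bddAbove_Sset v hmv hfinv hx0) ht.le hxb)
  refine le_trans (measure_mono h1) (le_trans (measure_union_le _ _) ?_)
  rw [Real.volume_singleton, add_zero]
  rcases le_or_gt a b with hab | hab
  · have : Ia ⊆ Ib := fun x hx => lt_of_lt_of_le hx hab
    rw [Set.diff_eq_empty.2 this]
    simp
  · -- vol (Ia \ Ib) = a - b ≤ RHS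
    have hIaeq : Ia = Ioo (-(a.toReal/2)) (a.toReal/2) := Iset_eq u hafin
    have hIbeq : Ib = Ioo (-(b.toReal/2)) (b.toReal/2) := Iset_eq v hbfin
    have hsub : Ib ⊆ Ia := fun x hx => lt_trans hx hab
    have hIbm : NullMeasurableSet Ib volume := by
      rw [hIbeq]; exact measurableSet_Ioo.nullMeasurableSet
    have hIbfin : volume Ib ≠ ∞ := by
      rw [hIbeq, Real.volume_Ioo]; exact ofReal_ne_top
    have hdiff : volume (Ia \ Ib) = a - b := by
      rw [measure_diff hsub hIbm hIbfin]
      rw [hIaeq, hIbeq, Real.volume_Ioo, Real.volume_Ioo]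
      have h2a : ((a.toReal)/2 - -((a.toReal)/2)) = a.toReal := by ring
      have h2b : ((b.toReal)/2 - -((b.toReal)/2)) = b.toReal := by ring
      rw [h2a, h2b, ENNReal.ofReal_toReal hafin, ENNReal.ofReal_toReal hbfin]

    rw [hdiff]
    rw [tsub_le_iff_right]
    calc a = volume {y | s < |u y|} := rfl
    _ ≤ volume (({y | s < |u y|} \ {y | t < |v y|}) ∪ {y | t < |v y|}) :=
        measure_mono (by intro y hy; by_cases h : t < |v y| <;> simp [h, hy])
    _ ≤ volume ({y | s < |u y|} \ {y | t < |v y|}) + b := measure_union_le _ _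

lemma lint_Ioo_left {c q lo hi : ℝ} (hlh : lo < hi) (hq : -1 < q) (hc : 0 ≤ c) :
    ∫⁻ t in Ioo lo hi, ENNReal.ofReal (c * (hi - t) ^ q) =
      ENNReal.ofReal (c * (hi - lo) ^ (q + 1) / (q + 1)) := by
  have hint : IntervalIntegrable (fun t : ℝ => c * (hi - t) ^ q) volume lo hi := by
    apply IntervalIntegrable.const_mul
    have h1 : IntervalIntegrable (fun x : ℝ => x ^ q) volume (hi - hi) (hi - lo) :=
      intervalIntegral.intervalIntegrable_rpow' hq
    simpa using (h1.comp_sub_left hi).symm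
  have hIO : IntegrableOn (fun t : ℝ => c * (hi - t) ^ q) (Ioo lo hi) volume := by
    rw [intervalIntegrable_iff_integrableOn_Ioo_of_le hlh.le] at hint
    exact hint
  rw [← ofReal_integral_eq_lintegral_ofReal hIO ?_]
  · congr 1
    rw [← integral_Ioc_eq_integral_Ioo, ← intervalIntegral.integral_of_le hlh.le,
      intervalIntegral.integral_const_mul, intervalIntegral.integral_comp_sub_left (fun x => x ^ q) hi]
    rw [sub_self]
    rw [integral_rpow (Or.inl hq)]
    rw [Real.zero_rpow (by linarith)]
    ring
  · filter_upwards [ae_restrict_mem measurableSet_Ioo] with t ht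
    have : (0:ℝ) ≤ (hi - t) ^ q := Real.rpow_nonneg (by linarith [ht.2]) q
    positivity

lemma lint_Ioo_right {c q lo hi : ℝ} (hlh : lo < hi) (hq : -1 < q) (hc : 0 ≤ c) :
    ∫⁻ s in Ioo lo hi, ENNReal.ofReal (c * (s - lo) ^ q) =
      ENNReal.ofReal (c * (hi - lo) ^ (q + 1) / (q + 1)) := by
  have hint : IntervalIntegrable (fun t : ℝ => c * (t - lo) ^ q) volume lo hi := by
    apply IntervalIntegrable.const_mul
    have h1 : IntervalIntegrable (fun x : ℝ => x ^ q) volume (lo - lo) (hi - lo) :=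
      intervalIntegral.intervalIntegrable_rpow' hq
    simpa using h1.comp_sub_right lo
  have hIO : IntegrableOn (fun t : ℝ => c * (t - lo) ^ q) (Ioo lo hi) volume := by
    rw [intervalIntegrable_iff_integrableOn_Ioo_of_le hlh.le] at hint
    exact hint
  rw [← ofReal_integral_eq_lintegral_ofReal hIO ?_]
  · congr 1
    rw [← integral_Ioc_eq_integral_Ioo, ← intervalIntegral.integral_of_le hlh.le,
      intervalIntegral.integral_const_mul,
      intervalIntegral.integral_comp_sub_right (fun x => x ^ q) lo]
    rw [sub_self, integral_rpow (Or.inl hq), Real.zero_rpow (by linarith)]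
    ring
  · filter_upwards [ae_restrict_mem measurableSet_Ioo] with t ht
    have : (0:ℝ) ≤ (t - lo) ^ q := Real.rpow_nonneg (by linarith [ht.1]) q
    positivity

lemma P0 {p : ℝ} (hp : 1 < p) {a b : ℝ} (hb : 0 ≤ b) (hba : b < a) :
    ∫⁻ z, (D1 a b).indicator (ker p) z ∂nu = ENNReal.ofReal ((a - b) ^ p) := by
  have hmeas : Measurable ((D1 a b).indicator (ker p)) :=
    (measurable_ker p).indicator (measurableSet_D1 a b)
  rw [nu, lintegral_prod _ hmeas.aemeasurable]
  have hinner : ∀ s : ℝ, (∫⁻ t in Ioi 0, (D1 a b).indicator (ker p) (s, t)) =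
      (Ioo b a).indicator (fun s => ENNReal.ofReal (p * (s - b) ^ (p-1))) s := by
    intro s
    by_cases hs : s ∈ Ioo b a
    · obtain ⟨hbs, hsa⟩ := hs
      rw [indicator_of_mem (show s ∈ Ioo b a from ⟨hbs, hsa⟩)]
      have heq : ∀ t : ℝ, (D1 a b).indicator (ker p) (s, t) =
          (Ico b s).indicator (fun t => ker p (s, t)) t := by
        intro t
        by_cases ht : t ∈ Ico b s
        · rw [indicator_of_mem ht, indicator_of_mem]
          exact ⟨ht.2, hsa, ht.1⟩
        · rw [indicator_of_notMem ht, indicator_of_notMem]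
          rintro ⟨h1, _, h3⟩
          exact ht ⟨h3, h1⟩
      simp_rw [heq]
      rw [lintegral_indicator measurableSet_Ico, Measure.restrict_restrict measurableSet_Ico]
      have hae : (Ico b s ∩ Ioi 0 : Set ℝ) =ᵐ[volume] (Ioo b s : Set ℝ) := by
        apply ae_eq_set.2
        constructor
        · apply measure_mono_null (?_ : _ ⊆ ({b} : Set ℝ)) (measure_singleton b)
          rintro t ⟨⟨⟨ht1, ht2⟩, _⟩, ht3⟩
          simp only [mem_Ioo, not_and] at ht3
          have : ¬ b < t := fun h => ht3 h ht2
          simp [le_antisymm (not_lt.1 this) ht1]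
        · apply measure_mono_null (?_ : _ ⊆ (∅ : Set ℝ)) measure_empty
          rintro t ⟨⟨ht1, ht2⟩, ht3⟩
          exact ht3 ⟨⟨ht1.le, ht2⟩, lt_of_le_of_lt hb ht1⟩
      rw [setLIntegral_congr hae]
      have hfun : ∀ t ∈ Ioo b s, ker p (s, t) =
          ENNReal.ofReal ((p*(p-1)) * (s - t) ^ (p-2)) := by
        intro t ht
        simp only [ker]
        congr 2
        rw [abs_of_pos (by simp only [mem_Ioo] at ht; linarith)]
      rw [setLIntegral_congr_fun measurableSet_Ioo hfun]
      rw [lint_Ioo_left hbs (by linarith) (by nlinarith)]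
      congr 1
      have hp1 : p - 2 + 1 = p - 1 := by ring
      rw [hp1]
      have hne : p - 1 ≠ 0 := by linarith
      field_simp
    · rw [indicator_of_notMem hs]
      have : ∀ t : ℝ, (D1 a b).indicator (ker p) (s, t) = 0 := by
        intro t
        apply indicator_of_notMem
        rintro ⟨h1, h2, h3⟩
        simp only [mem_Ioo, not_and, not_lt] at hs
        rcases lt_or_ge b s with hbs | hbs
        · exact absurd h2 (not_lt.2 (hs hbs))
        · linarith
      simp_rw [this]
      simp
  simp_rw [hinner]
  rw [lintegral_indicator measurableSet_Ioo, Measure.restrict_restrict measurableSet_Ioo]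
  have hss : Ioo b a ∩ Ioi (0:ℝ) = Ioo b a :=
    inter_eq_left.2 (fun s hs => lt_of_le_of_lt hb hs.1)
  rw [hss]
  rw [lint_Ioo_right hba (by linarith) (by linarith)]
  congr 1
  have : p - 1 + 1 = p := by ring
  rw [this]
  field_simp

lemma D1_empty {a b : ℝ} (hab : a ≤ b) : D1 a b = ∅ := by
  ext z; simp only [D1, mem_setOf_eq, mem_empty_iff_false, iff_false]
  rintro ⟨h1, h2, h3⟩; linarith

lemma D2_empty {a b : ℝ} (hba : b ≤ a) : D2 a b = ∅ := by
  ext z; simp only [D2, mem_setOf_eq, mem_empty_iff_false, iff_false]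
  rintro ⟨h1, h2, h3⟩; linarith

lemma D2_swap_integral (p a b : ℝ) :
    ∫⁻ z, (D2 a b).indicator (ker p) z ∂nu = ∫⁻ z, (D1 b a).indicator (ker p) z ∂nu := by
  have hswap : ∀ z : ℝ × ℝ, (D2 a b).indicator (ker p) z =
      (D1 b a).indicator (ker p) (Prod.swap z) := by
    intro z
    have hmem : z ∈ D2 a b ↔ Prod.swap z ∈ D1 b a := Iff.rfl
    have hker : ker p (Prod.swap z) = ker p z := by
      simp only [ker, Prod.swap]
      rw [abs_sub_comm]
    by_cases hz : z ∈ D2 a b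
    · rw [indicator_of_mem hz, indicator_of_mem (hmem.1 hz), hker]
    · rw [indicator_of_notMem hz, indicator_of_notMem (fun h => hz (hmem.2 h))]
  simp_rw [hswap]
  rw [← lintegral_map ((measurable_ker p).indicator (measurableSet_D1 b a)) measurable_swap]
  rw [show Measure.map Prod.swap nu = nu from Measure.prod_swap]

lemma P1 {p : ℝ} (hp : 1 < p) {a b : ℝ} (ha : 0 ≤ a) (hb : 0 ≤ b) :
    ∫⁻ z, ((D1 a b).indicator (ker p) z + (D2 a b).indicator (ker p) z) ∂nu =
      ENNReal.ofReal (|a - b| ^ p) := by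
  rw [lintegral_add_left ((measurable_ker p).indicator (measurableSet_D1 a b))]
  rcases lt_trichotomy a b with hab | rfl | hab
  · rw [D1_empty hab.le, D2_swap_integral, P0 hp ha hab]
    simp only [indicator_empty, lintegral_zero, zero_add]
    rw [abs_of_neg (by linarith), ← neg_sub]
  · rw [D1_empty le_rfl, D2_empty le_rfl]
    simp [Real.zero_rpow (by linarith : p ≠ 0)]
  · rw [D2_empty hab.le, P0 hp hb hab]
    simp only [indicator_empty, lintegral_zero, add_zero]
    rw [abs_of_pos (by linarith)]

instance : SFinite nu := by unfold nu; infer_instance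

lemma rep {p : ℝ} (hp : 1 < p) (F G : ℝ → ℝ) (hF : Measurable F) (hG : Measurable G)
    (hF0 : ∀ x, 0 ≤ F x) (hG0 : ∀ x, 0 ≤ G x) :
    ∫⁻ x, ENNReal.ofReal (|F x - G x| ^ p) =
      ∫⁻ z, ker p z * (volume {x | z.2 < z.1 ∧ z.1 < F x ∧ G x ≤ z.2}
        + volume {x | z.1 < z.2 ∧ z.2 < G x ∧ F x ≤ z.1}) ∂nu := by
  set E1 : Set (ℝ × (ℝ × ℝ)) := {w | w.2.2 < w.2.1 ∧ w.2.1 < F w.1 ∧ G w.1 ≤ w.2.2} with hE1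
  set E2 : Set (ℝ × (ℝ × ℝ)) := {w | w.2.1 < w.2.2 ∧ w.2.2 < G w.1 ∧ F w.1 ≤ w.2.1} with hE2
  have hE1m : MeasurableSet E1 :=
    ((measurableSet_lt (measurable_snd.snd) (measurable_snd.fst)).inter
      ((measurableSet_lt (measurable_snd.fst) (hF.comp measurable_fst)).inter
        (measurableSet_le (hG.comp measurable_fst) (measurable_snd.snd))))
  have hE2m : MeasurableSet E2 :=
    ((measurableSet_lt (measurable_snd.fst) (measurable_snd.snd)).inter
      ((measurableSet_lt (measurable_snd.snd) (hG.comp measurable_fst)).inter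
        (measurableSet_le (hF.comp measurable_fst) (measurable_snd.fst))))
  set H : ℝ → ℝ × ℝ → ℝ≥0∞ := fun x z =>
    E1.indicator (fun w => ker p w.2) (x, z) + E2.indicator (fun w => ker p w.2) (x, z) with hH
  have hHm : Measurable (Function.uncurry H) := by
    have : Function.uncurry H = E1.indicator (fun w => ker p w.2) +
        E2.indicator (fun w => ker p w.2) := by
      funext w; simp only [Function.uncurry, hH, Pi.add_apply]
    rw [this]
    exact (((measurable_ker p).comp measurable_snd).indicator hE1m).add
      (((measurable_ker p).comp measurable_snd).indicator hE2m)
  have step1 : ∀ x, ENNReal.ofReal (|F x - G x| ^ p) = ∫⁻ z, H x z ∂nu := by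
    intro x
    rw [← P1 hp (hF0 x) (hG0 x)]
    apply lintegral_congr
    intro z
    simp only [hH]
    congr 1
  simp_rw [step1]
  rw [lintegral_lintegral_swap hHm.aemeasurable]
  apply lintegral_congr
  intro z
  have hS1 : MeasurableSet {x : ℝ | z.2 < z.1 ∧ z.1 < F x ∧ G x ≤ z.2} := by
    by_cases hc : z.2 < z.1
    · have : {x : ℝ | z.2 < z.1 ∧ z.1 < F x ∧ G x ≤ z.2} =
          {x | z.1 < F x} ∩ {x | G x ≤ z.2} := by
        ext x; simp [hc]
      rw [this]
      exact (measurableSet_lt measurable_const hF).inter (measurableSet_le hG measurable_const)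
    · have : {x : ℝ | z.2 < z.1 ∧ z.1 < F x ∧ G x ≤ z.2} = ∅ := by
        ext x; simp [hc]
      rw [this]; exact MeasurableSet.empty
  have hS2 : MeasurableSet {x : ℝ | z.1 < z.2 ∧ z.2 < G x ∧ F x ≤ z.1} := by
    by_cases hc : z.1 < z.2
    · have : {x : ℝ | z.1 < z.2 ∧ z.2 < G x ∧ F x ≤ z.1} =
          {x | z.2 < G x} ∩ {x | F x ≤ z.1} := by
        ext x; simp [hc]
      rw [this]
      exact (measurableSet_lt measurable_const hG).inter (measurableSet_le hF measurable_const)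
    · have : {x : ℝ | z.1 < z.2 ∧ z.2 < G x ∧ F x ≤ z.1} = ∅ := by
        ext x; simp [hc]
      rw [this]; exact MeasurableSet.empty
  have e1 : ∀ x, E1.indicator (fun w => ker p w.2) (x, z) =
      ({x : ℝ | z.2 < z.1 ∧ z.1 < F x ∧ G x ≤ z.2}).indicator (fun _ => ker p z) x := by
    intro x
    by_cases hx : (x, z) ∈ E1
    · rw [indicator_of_mem hx, indicator_of_mem (show x ∈ _ from hx)]
    · rw [indicator_of_notMem hx, indicator_of_notMem (show x ∉ _ from hx)]
  have e2 : ∀ x, E2.indicator (fun w => ker p w.2) (x, z) =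
      ({x : ℝ | z.1 < z.2 ∧ z.2 < G x ∧ F x ≤ z.1}).indicator (fun _ => ker p z) x := by
    intro x
    by_cases hx : (x, z) ∈ E2
    · rw [indicator_of_mem hx, indicator_of_mem (show x ∈ _ from hx)]
    · rw [indicator_of_notMem hx, indicator_of_notMem (show x ∉ _ from hx)]
  simp only [hH]
  simp_rw [e1, e2]
  rw [lintegral_add_left ((measurable_const).indicator hS1)]
  rw [lintegral_indicator_const hS1, lintegral_indicator_const hS2, mul_add]

lemma vol_Ico_inter {a b : ℝ} (hb : 0 ≤ b) :
    volume (Ico b a ∩ Ioi 0) = ENNReal.ofReal (a - b) := by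
  rcases eq_or_lt_of_le hb with rfl | hb'
  · have : Ico (0:ℝ) a ∩ Ioi 0 = Ioo 0 a := by
      ext s; simp only [mem_inter_iff, mem_Ico, mem_Ioi, mem_Ioo]
      exact ⟨fun ⟨⟨_, h2⟩, h3⟩ => ⟨h3, h2⟩, fun ⟨h1, h2⟩ => ⟨⟨h1.le, h2⟩, h1⟩⟩
    rw [this, Real.volume_Ioo, sub_zero]
  · have : Ico b a ∩ Ioi 0 = Ico b a := by
      apply inter_eq_left.2
      intro s hs; exact lt_of_lt_of_le hb' hs.1
    rw [this, Real.volume_Ico]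

lemma P1one {a b : ℝ} (ha : 0 ≤ a) (hb : 0 ≤ b) :
    ∫⁻ s in Ioi (0:ℝ), ((Ico b a).indicator (fun _ => (1:ℝ≥0∞)) s
      + (Ico a b).indicator (fun _ => (1:ℝ≥0∞)) s) = ENNReal.ofReal (|a - b|) := by
  rw [lintegral_add_left (measurable_const.indicator measurableSet_Ico)]
  rw [lintegral_indicator_const measurableSet_Ico, lintegral_indicator_const measurableSet_Ico]
  rw [Measure.restrict_apply measurableSet_Ico, Measure.restrict_apply measurableSet_Ico]
  rw [vol_Ico_inter hb, vol_Ico_inter ha]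
  rcases le_total a b with h | h
  · rw [ENNReal.ofReal_of_nonpos (by linarith), abs_of_nonpos (by linarith)]
    simp [neg_sub]
  · rw [ENNReal.ofReal_of_nonpos (p := b - a) (by linarith), abs_of_nonneg (by linarith)]
    simp

lemma rep1 (F G : ℝ → ℝ) (hF : Measurable F) (hG : Measurable G)
    (hF0 : ∀ x, 0 ≤ F x) (hG0 : ∀ x, 0 ≤ G x) :
    ∫⁻ x, ENNReal.ofReal (|F x - G x|) =
      ∫⁻ s in Ioi (0:ℝ), (volume ({x | s < F x} \ {x | s < G x})
        + volume ({x | s < G x} \ {x | s < F x})) := by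
  set E1 : Set (ℝ × ℝ) := {w | G w.1 ≤ w.2 ∧ w.2 < F w.1} with hE1
  set E2 : Set (ℝ × ℝ) := {w | F w.1 ≤ w.2 ∧ w.2 < G w.1} with hE2
  have hE1m : MeasurableSet E1 :=
    (measurableSet_le (hG.comp measurable_fst) measurable_snd).inter
      (measurableSet_lt measurable_snd (hF.comp measurable_fst))
  have hE2m : MeasurableSet E2 :=
    (measurableSet_le (hF.comp measurable_fst) measurable_snd).inter
      (measurableSet_lt measurable_snd (hG.comp measurable_fst))
  set H : ℝ → ℝ → ℝ≥0∞ := fun x s =>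
    E1.indicator (fun _ => (1:ℝ≥0∞)) (x, s) + E2.indicator (fun _ => (1:ℝ≥0∞)) (x, s) with hH
  have hHm : Measurable (Function.uncurry H) := by
    have : Function.uncurry H = E1.indicator (fun _ => (1:ℝ≥0∞))
        + E2.indicator (fun _ => (1:ℝ≥0∞)) := by
      funext w; simp only [Function.uncurry, hH, Pi.add_apply]
    rw [this]
    exact (measurable_const.indicator hE1m).add (measurable_const.indicator hE2m)
  have step1 : ∀ x, ENNReal.ofReal (|F x - G x|) = ∫⁻ s in Ioi (0:ℝ), H x s := by
    intro x
    rw [← P1one (hF0 x) (hG0 x)]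
    exact lintegral_congr fun s => rfl
  simp_rw [step1]
  rw [lintegral_lintegral_swap hHm.aemeasurable]
  apply lintegral_congr
  intro s
  have h1 : {x : ℝ | s < F x} \ {x | s < G x} = {x | G x ≤ s ∧ s < F x} := by
    ext x; simp only [mem_diff, mem_setOf_eq, not_lt]; tauto
  have h2 : {x : ℝ | s < G x} \ {x | s < F x} = {x | F x ≤ s ∧ s < G x} := by
    ext x; simp only [mem_diff, mem_setOf_eq, not_lt]; tauto
  have hS1 : MeasurableSet {x : ℝ | G x ≤ s ∧ s < F x} :=
    (measurableSet_le hG measurable_const).inter (measurableSet_lt measurable_const hF)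
  have hS2 : MeasurableSet {x : ℝ | F x ≤ s ∧ s < G x} :=
    (measurableSet_le hF measurable_const).inter (measurableSet_lt measurable_const hG)
  have e1 : ∀ x, E1.indicator (fun _ => (1:ℝ≥0∞)) (x, s) =
      ({x : ℝ | G x ≤ s ∧ s < F x}).indicator (fun _ => (1:ℝ≥0∞)) x := fun x => rfl
  have e2 : ∀ x, E2.indicator (fun _ => (1:ℝ≥0∞)) (x, s) =
      ({x : ℝ | F x ≤ s ∧ s < G x}).indicator (fun _ => (1:ℝ≥0∞)) x := fun x => rfl
  simp only [hH]
  simp_rw [e1, e2]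
  rw [lintegral_add_left (measurable_const.indicator hS1)]
  rw [lintegral_indicator_const hS1, lintegral_indicator_const hS2, one_mul, one_mul, h1, h2]

lemma distf_fin {p : ℝ} (hp : 1 ≤ p) {u : ℝ → ℝ} (hu : MemLp u (ENNReal.ofReal p) volume) :
    ∀ c : ℝ, 0 < c → distf u c ≠ ∞ := by
  intro c hc
  have hq0 : (ENNReal.ofReal p) ≠ 0 := by
    simp only [ne_eq, ENNReal.ofReal_eq_zero, not_le]; linarith
  have h := hu.meas_ge_lt_top' hq0 ofReal_ne_top
    (ε := ENNReal.ofReal c) (by simp [ENNReal.ofReal_eq_zero]; linarith)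
  refine ne_top_of_le_ne_top h.ne (measure_mono ?_)
  intro y hy
  simp only [mem_setOf_eq] at *
  rw [← enorm_eq_nnnorm, Real.enorm_eq_ofReal_abs]
  exact ENNReal.ofReal_le_ofReal hy.le

lemma schwarz_congr {u u' : ℝ → ℝ} (h : u =ᵐ[volume] u') :
    schwarzRearr u = schwarzRearr u' := by
  have hd : ∀ t : ℝ, volume {y : ℝ | t < |u y|} = volume {y : ℝ | t < |u' y|} := by
    intro t
    apply measure_congr
    rw [Filter.eventuallyEq_set]
    filter_upwards [h] with y hy
    simp [hy]
  funext x
  simp only [schwarzRearr]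
  congr 1
  ext t
  simp [hd t]

lemma main_ineq {p : ℝ} (hp : 1 ≤ p) {u v : ℝ → ℝ} (hmu : Measurable u) (hmv : Measurable v)
    (hfu : ∀ c : ℝ, 0 < c → distf u c ≠ ∞) (hfv : ∀ c : ℝ, 0 < c → distf v c ≠ ∞) :
    eLpNorm (schwarzRearr u - schwarzRearr v) (ENNReal.ofReal p) volume ≤
      eLpNorm (u - v) (ENNReal.ofReal p) volume := by
  have hp0 : (0:ℝ) < p := by linarith
  have hq0 : (ENNReal.ofReal p) ≠ 0 := by
    simp only [ne_eq, ENNReal.ofReal_eq_zero, not_le]; linarith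
  have htr : (ENNReal.ofReal p).toReal = p := toReal_ofReal hp0.le
  rw [eLpNorm_eq_lintegral_rpow_enorm_toReal hq0 ofReal_ne_top,
    eLpNorm_eq_lintegral_rpow_enorm_toReal hq0 ofReal_ne_top, htr]
  apply ENNReal.rpow_le_rpow _ (by positivity)
  set F := schwarzRearr u with hF
  set G := schwarzRearr v with hG
  have hFm : Measurable F := measurable_schwarz u hmu hfu
  have hGm : Measurable G := measurable_schwarz v hmv hfv
  have habs : ∀ (h : ℝ → ℝ) (x : ℝ), ((‖h x‖₊ : ℝ≥0∞)) ^ p = ENNReal.ofReal (|h x| ^ p) := by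
    intro h x
    rw [← enorm_eq_nnnorm, Real.enorm_eq_ofReal_abs, ← ENNReal.ofReal_rpow_of_nonneg (abs_nonneg _) hp0.le]
  calc ∫⁻ x, ((‖(F - G) x‖₊ : ℝ≥0∞)) ^ p
      = ∫⁻ x, ENNReal.ofReal (|F x - G x| ^ p) := by
        apply lintegral_congr; intro x; rw [Pi.sub_apply, habs]
    _ ≤ ∫⁻ x, ENNReal.ofReal (|(|u x| - |v x|)| ^ p) := by
        rcases eq_or_lt_of_le hp with rfl | hp1
        · simp_rw [Real.rpow_one]
          rw [rep1 F G hFm hGm (schwarz_nonneg u) (schwarz_nonneg v),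
            rep1 (fun y => |u y|) (fun y => |v y|) hmu.abs hmv.abs
              (fun y => abs_nonneg _) (fun y => abs_nonneg _)]
          apply lintegral_mono_ae
          filter_upwards [ae_restrict_mem measurableSet_Ioi] with s hs
          exact add_le_add (key_comparison u v hmu hmv hfu hfv hs hs)
            (key_comparison v u hmv hmu hfv hfu hs hs)
        · rw [rep hp1 F G hFm hGm (schwarz_nonneg u) (schwarz_nonneg v),
            rep hp1 (fun y => |u y|) (fun y => |v y|) hmu.abs hmv.abs
              (fun y => abs_nonneg _) (fun y => abs_nonneg _)]
          apply lintegral_mono_ae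
          have hae : ∀ᵐ z ∂nu, z ∈ Ioi (0:ℝ) ×ˢ Ioi (0:ℝ) := by
            rw [nu, Measure.prod_restrict]
            exact ae_restrict_mem (measurableSet_Ioi.prod measurableSet_Ioi)
          filter_upwards [hae] with z hz
          obtain ⟨hz1, hz2⟩ := hz
          apply mul_le_mul_right
          apply add_le_add
          · by_cases hc : z.2 < z.1
            · have h1 : {x | z.2 < z.1 ∧ z.1 < F x ∧ G x ≤ z.2} =
                  {x | z.1 < F x} \ {x | z.2 < G x} := by
                ext x; simp only [mem_setOf_eq, mem_diff, not_lt, hc, true_and]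
              have h2 : {x | z.2 < z.1 ∧ z.1 < |u x| ∧ |v x| ≤ z.2} =
                  {y | z.1 < |u y|} \ {y | z.2 < |v y|} := by
                ext x; simp only [mem_setOf_eq, mem_diff, not_lt, hc, true_and]
              rw [h1, h2]
              exact key_comparison u v hmu hmv hfu hfv hz1 hz2
            · have h1 : {x | z.2 < z.1 ∧ z.1 < F x ∧ G x ≤ z.2} = ∅ := by
                ext x; simp [hc]
              rw [h1]; simp
          · by_cases hc : z.1 < z.2
            · have h1 : {x | z.1 < z.2 ∧ z.2 < G x ∧ F x ≤ z.1} =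
                  {x | z.2 < G x} \ {x | z.1 < F x} := by
                ext x; simp only [mem_setOf_eq, mem_diff, not_lt, hc, true_and]
              have h2 : {x | z.1 < z.2 ∧ z.2 < |v x| ∧ |u x| ≤ z.1} =
                  {y | z.2 < |v y|} \ {y | z.1 < |u y|} := by
                ext x; simp only [mem_setOf_eq, mem_diff, not_lt, hc, true_and]
              rw [h1, h2]
              exact key_comparison v u hmv hmu hfv hfu hz2 hz1
            · have h1 : {x | z.1 < z.2 ∧ z.2 < G x ∧ F x ≤ z.1} = ∅ := by
                ext x; simp [hc]
              rw [h1]; simp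
    _ ≤ ∫⁻ x, ((‖(u - v) x‖₊ : ℝ≥0∞)) ^ p := by
        apply lintegral_mono
        intro x
        show ENNReal.ofReal _ ≤ (‖(u - v) x‖₊ : ℝ≥0∞) ^ p
        rw [Pi.sub_apply, habs]
        apply ENNReal.ofReal_le_ofReal
        exact Real.rpow_le_rpow (abs_nonneg _) (abs_abs_sub_abs_le_abs_sub _ _) hp0.le

end Aux

/-- Nonexpansivity of the Schwarz symmetric decreasing rearrangement in `L^p(ℝ)`. -/
theorem schwarz_rearrangement_nonexpansive
    (p : ℝ) (hp : 1 ≤ p) (u v : ℝ → ℝ)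
    (hu : MemLp u (ENNReal.ofReal p) volume) (hv : MemLp v (ENNReal.ofReal p) volume) :
    eLpNorm (schwarzRearr u - schwarzRearr v) (ENNReal.ofReal p) volume
      ≤ eLpNorm (u - v) (ENNReal.ofReal p) volume := by
  have hum := hu.aestronglyMeasurable.aemeasurable
  have hvm := hv.aestronglyMeasurable.aemeasurable
  have hueq : u =ᵐ[volume] hum.mk u := hum.ae_eq_mk
  have hveq : v =ᵐ[volume] hvm.mk v := hvm.ae_eq_mk
  have hsub : (u - v : ℝ → ℝ) =ᵐ[volume] (hum.mk u - hvm.mk v : ℝ → ℝ) := hueq.sub hveq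
  rw [schwarz_congr hueq, schwarz_congr hveq, eLpNorm_congr_ae hsub]
  exact main_ineq hp hum.measurable_mk hvm.measurable_mk
    (distf_fin hp (hu.ae_eq hueq)) (distf_fin hp (hv.ae_eq hveq))
end
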